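/- arXiv:1609.05493 — 5 statements merged into one kernel-verified Lean document; each statement's English description precedes it below -/
import Mathlib

section
/- The formal power series C_0(s) = (-1 + 12s - 24s^2 + (1-8s)^{3/2})/(32 s^2), expanded around s = 0, satisfies the differential equation (sC_0)' = 3(2s^2 C_0' + s C_0) + 3 s^3 C_0' + s^3 (4 C_0 + 6 s C_0') C_0' + 2s. -/
open PowerSeries

private lemma dnum (n : ℕ) [n.AtLeastTwo] :
    d⁄dX ℚ (OfNat.ofNat n : ℚ⟦X⟧) = 0 := by
  rw [← Nat.cast_ofNat]
  exact Derivation.map_natCast _ _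

/-- The formal power series `C₀(s) = (-1 + 12s - 24s² + (1-8s)^{3/2})/(32 s²)`,
where `(1-8s)^{3/2}` is the formal binomial series, i.e. the unique power series `B`
with `B² = (1-8s)³` and constant term `1`, satisfies the differential equation
`(sC₀)' = 3(2s²C₀' + sC₀) + 3s³C₀' + s³(4C₀ + 6sC₀')C₀' + 2s`. -/
theorem stmt0 (B C₀ : ℚ⟦X⟧)
    (hB : B ^ 2 = (1 - 8 * X) ^ 3)
    (hB0 : constantCoeff B = 1)
    (hC : 32 * X ^ 2 * C₀ = -1 + 12 * X - 24 * X ^ 2 + B) :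
    d⁄dX ℚ (X * C₀) =
      3 * (2 * X ^ 2 * d⁄dX ℚ C₀ + X * C₀) + 3 * X ^ 3 * d⁄dX ℚ C₀
        + X ^ 3 * (4 * C₀ + 6 * X * d⁄dX ℚ C₀) * d⁄dX ℚ C₀ + 2 * X := by
  set v := d⁄dX ℚ C₀ with hv
  set W := d⁄dX ℚ B with hW
  have hXne : (X : ℚ⟦X⟧) ≠ 0 := X_ne_zero
  have hBne : B ≠ 0 := by
    intro h
    rw [h, map_zero] at hB0
    exact one_ne_zero hB0.symm
  have h64ne : (64 * X ^ 2 : ℚ⟦X⟧) ≠ 0 := by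
    apply mul_ne_zero _ (pow_ne_zero _ hXne)
    intro h
    have := congrArg constantCoeff h
    simp [map_ofNat] at this
  -- derivative of hC
  have hC' : 32 * X ^ 2 * v + 64 * X * C₀ = 12 - 48 * X + W := by
    have h := congrArg (d⁄dX ℚ) hC
    simp only [Derivation.leibniz, Derivation.leibniz_pow, derivative_X, dnum 32, dnum 12, dnum 24, dnum 48, dnum 8,
      map_add, map_sub, map_neg, Derivation.map_one_eq_zero, smul_eq_mul,
      nsmul_eq_mul, Nat.cast_ofNat, ← hv, ← hW] at h
    linear_combination h
  -- derivative of hB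
  have hB' : 2 * B * W = -24 * (1 - 8 * X) ^ 2 := by
    have h := congrArg (d⁄dX ℚ) hB
    simp only [Derivation.leibniz, Derivation.leibniz_pow, derivative_X, dnum 32, dnum 12, dnum 24, dnum 48, dnum 8,
      map_add, map_sub, map_neg, Derivation.map_one_eq_zero, smul_eq_mul,
      nsmul_eq_mul, Nat.cast_ofNat, ← hW] at h
    linear_combination h
  -- the algebraic relation satisfied by C₀
  have hR : 16 * X ^ 2 * C₀ ^ 2 + (1 - 12 * X + 24 * X ^ 2) * C₀ - X + 9 * X ^ 2 = 0 := by
    apply mul_left_cancel₀ h64ne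
    rw [mul_zero]
    linear_combination (32 * X ^ 2 * C₀ + 1 - 12 * X + 24 * X ^ 2 + B) * hC + hB
  -- B * C₀' = Q
  have hQ : B * v = 1 - 18 * X + (12 - 48 * X) * C₀ - 32 * X * C₀ ^ 2 := by
    apply mul_left_cancel₀ h64ne
    linear_combination 2 * B * hC' + hB'
      + (128 * X * C₀ - 24 + 96 * X) * hC - 128 * X * hR
  -- expand the derivative on the left
  have hL : d⁄dX ℚ (X * C₀) = C₀ + X * v := by
    rw [Derivation.leibniz, derivative_X, smul_eq_mul, smul_eq_mul]
    ring
  rw [hL]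
  -- cancel B² from the key polynomial identity
  have hB2ne : B ^ 2 ≠ 0 := pow_ne_zero _ hBne
  apply mul_left_cancel₀ hB2ne
  linear_combination
    ((-6 * X ^ 4) * (B * v + (1 - 18 * X + (12 - 48 * X) * C₀ - 32 * X * C₀ ^ 2))
        + (X - 6 * X ^ 2 - 3 * X ^ 3 - 4 * X ^ 3 * C₀) * B) * hQ
    - ((X - 6 * X ^ 2 - 3 * X ^ 3 - 4 * X ^ 3 * C₀)
          * (1 - 18 * X + (12 - 48 * X) * C₀ - 32 * X * C₀ ^ 2)
        + (C₀ - 3 * X * C₀ - 2 * X)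
          * (B + (1 - 12 * X + 24 * X ^ 2 + 32 * X ^ 2 * C₀))) * hC
    + (1 - 3 * X - 60 * X ^ 2 + 96 * X ^ 3 - 72 * X ^ 4
        + (16 * X ^ 2 + 192 * X ^ 3 - 192 * X ^ 4) * C₀ - 128 * X ^ 4 * C₀ ^ 2) * hR
end

section
/- Under the substitution s = t(1-2t), the generating function C_0 for genus-0 rooted hypermaps satisfies C_0(t(1-2t)) = t(1-3t)/(1-2t)^2 as an identity of formal power series in t, where C_0(s) = (-1 + 12s - 24s^2 + (1-8s)^{3/2})/(32 s^2). -/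
open PowerSeries

/-- Formal composition `f ∘ u` of formal power series (intended for `u` with zero
constant term): the `n`-th coefficient is `∑_{k ≤ n} f_k · [Xⁿ] uᵏ`. -/
noncomputable def PowerSeries.comp (f u : ℚ⟦X⟧) : ℚ⟦X⟧ :=
  PowerSeries.mk fun n => ∑ k ∈ Finset.range (n + 1),
    PowerSeries.coeff k f * PowerSeries.coeff n (u ^ k)

namespace CompAux

variable {u : ℚ⟦X⟧}

lemma pow_coeff_zero (hu : constantCoeff u = 0) {n k : ℕ} (h : n < k) :
    coeff n (u ^ k) = 0 :=
  X_pow_dvd_iff.mp (pow_dvd_pow_of_dvd (X_dvd_iff.mpr hu) k) n h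

lemma coeff_comp (f : ℚ⟦X⟧) (n : ℕ) :
    coeff n (f.comp u) = ∑ k ∈ Finset.range (n + 1),
      coeff k f * coeff n (u ^ k) := by
  simp [PowerSeries.comp]

lemma coeff_eval₂ (P : Polynomial ℚ) (n : ℕ) :
    coeff n (Polynomial.eval₂ C u P)
      = ∑ k ∈ P.support, P.coeff k * coeff n (u ^ k) := by
  rw [Polynomial.eval₂_eq_sum, Polynomial.sum, map_sum]
  apply Finset.sum_congr rfl
  intro k _
  simp [coeff_C_mul]

lemma coeff_eval₂_trunc (hu : constantCoeff u = 0) (f : ℚ⟦X⟧) {n m : ℕ} (h : n < m) :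
    coeff n (Polynomial.eval₂ C u (trunc m f)) = coeff n (f.comp u) := by
  rw [coeff_eval₂, coeff_comp]
  rw [Finset.sum_subset (s₁ := (trunc m f).support) (s₂ := Finset.range m)
    (fun k hk => by
      rw [Finset.mem_range]
      by_contra hkm
      have := Polynomial.mem_support_iff.mp hk
      rw [coeff_trunc, if_neg (by omega)] at this
      exact this rfl)
    (fun k _ hk => by simp [Polynomial.notMem_support_iff.mp hk])]
  rw [← Finset.sum_subset (s₁ := Finset.range (n+1)) (s₂ := Finset.range m)
    (Finset.range_subset_range.mpr (by omega))
    (fun k hk hk' => by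
      rw [pow_coeff_zero hu (by simp only [Finset.mem_range] at hk hk'; omega), mul_zero])]
  apply Finset.sum_congr rfl
  intro k hk
  rw [coeff_trunc, if_pos (by simp only [Finset.mem_range] at hk; omega)]

lemma eval₂_coeff_zero (hu : constantCoeff u = 0) (P : Polynomial ℚ) (n : ℕ)
    (hP : ∀ k ≤ n, P.coeff k = 0) :
    coeff n (Polynomial.eval₂ C u P) = 0 := by
  rw [coeff_eval₂]
  apply Finset.sum_eq_zero
  intro k _
  rcases le_or_gt k n with h | h
  · rw [hP k h, zero_mul]
  · rw [pow_coeff_zero hu h, mul_zero]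

lemma comp_mul (hu : constantCoeff u = 0) (f g : ℚ⟦X⟧) :
    (f * g).comp u = f.comp u * g.comp u := by
  ext n
  rw [← coeff_eval₂_trunc hu (f*g) (Nat.lt_succ_self n)]
  have key : coeff n (Polynomial.eval₂ C u (trunc (n+1) (f*g)))
      = coeff n (Polynomial.eval₂ C u (trunc (n+1) f * trunc (n+1) g)) := by
    have hdiff : ∀ k ≤ n,
        (trunc (n+1) (f*g) - trunc (n+1) f * trunc (n+1) g).coeff k = 0 := by
      intro k hk
      rw [Polynomial.coeff_sub, Polynomial.coeff_mul, coeff_trunc,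
        if_pos (by omega), PowerSeries.coeff_mul, sub_eq_zero]
      apply Finset.sum_congr rfl
      intro ij hij
      have hij' := Finset.HasAntidiagonal.mem_antidiagonal.mp hij
      rw [coeff_trunc, coeff_trunc, if_pos (by omega), if_pos (by omega)]
    have h0 := eval₂_coeff_zero hu _ n hdiff
    rw [Polynomial.eval₂_sub, map_sub, sub_eq_zero] at h0
    exact h0
  rw [key, Polynomial.eval₂_mul, PowerSeries.coeff_mul, PowerSeries.coeff_mul]
  apply Finset.sum_congr rfl
  intro ij hij
  have hij' := Finset.HasAntidiagonal.mem_antidiagonal.mp hij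
  rw [coeff_eval₂_trunc hu f (by omega), coeff_eval₂_trunc hu g (by omega)]

lemma comp_add (f g : ℚ⟦X⟧) : (f + g).comp u = f.comp u + g.comp u := by
  ext n
  simp [coeff_comp, add_mul, Finset.sum_add_distrib]

lemma comp_one : (1 : ℚ⟦X⟧).comp u = 1 := by
  ext n
  rw [coeff_comp, Finset.sum_eq_single 0]
  · simp
  · intro k _ hk
    simp [coeff_one, hk]
  · intro h
    simp at h

lemma comp_X (hu : constantCoeff u = 0) : (X : ℚ⟦X⟧).comp u = u := by
  ext n
  rcases Nat.eq_zero_or_pos n with h | h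
  · subst h
    rw [coeff_comp]
    simp [coeff_zero_eq_constantCoeff, hu]
  · rw [coeff_comp, Finset.sum_eq_single 1]
    · simp
    · intro k _ hk
      simp [coeff_X, hk]
    · intro hmem
      simp only [Finset.mem_range] at hmem
      omega

noncomputable def compHom (hu : constantCoeff u = 0) : ℚ⟦X⟧ →+* ℚ⟦X⟧ where
  toFun f := f.comp u
  map_one' := comp_one
  map_mul' := comp_mul hu
  map_zero' := by ext n; simp [coeff_comp]
  map_add' := comp_add

lemma compHom_apply (hu : constantCoeff u = 0) (f : ℚ⟦X⟧) :
    compHom hu f = f.comp u := rfl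

lemma constantCoeff_comp (f : ℚ⟦X⟧) :
    constantCoeff (f.comp u) = constantCoeff f := by
  rw [← coeff_zero_eq_constantCoeff_apply, coeff_comp]
  simp

end CompAux

open CompAux


/-- Under the substitution `s = t(1-2t)`, the genus-0 hypermap generating function
`C₀(s) = (-1 + 12s - 24s² + (1-8s)^{3/2})/(32s²)` (with `(1-8s)^{3/2}` the formal
binomial series, i.e. the unique `B` with `B² = (1-8s)³`, `B(0)=1`) satisfies
`C₀(t(1-2t)) = t(1-3t)/(1-2t)²` as formal power series in `t`. -/
theorem stmt1 (B C₀ : ℚ⟦X⟧)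
    (hB : B ^ 2 = (1 - 8 * X) ^ 3)
    (hB0 : constantCoeff B = 1)
    (hC : 32 * X ^ 2 * C₀ = -1 + 12 * X - 24 * X ^ 2 + B) :
    C₀.comp (X * (1 - 2 * X)) = X * (1 - 3 * X) * (((1 - 2 * X) ^ 2)⁻¹) := by
  set u : ℚ⟦X⟧ := X * (1 - 2 * X) with hu_def
  have hu : constantCoeff u = 0 := by
    simp [hu_def]
  set φ : ℚ⟦X⟧ →+* ℚ⟦X⟧ := compHom hu with hφ_def
  have hφX : φ X = u := comp_X hu
  -- apply φ to hB
  have hBu : (φ B) ^ 2 = ((1 - 4 * X) ^ 3) ^ 2 := by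
    have h := congrArg φ hB
    simp only [map_pow, map_sub, map_mul, map_one, map_ofNat, hφX] at h
    rw [h, hu_def]
    ring
  have hBconst : constantCoeff (φ B) = 1 := by
    rw [hφ_def, compHom_apply, constantCoeff_comp, hB0]
  have hBe : φ B = (1 - 4 * X) ^ 3 := by
    have h2 : (φ B - (1 - 4 * X) ^ 3) * (φ B + (1 - 4 * X) ^ 3) = 0 := by
      linear_combination hBu
    rcases mul_eq_zero.mp h2 with h | h
    · exact sub_eq_zero.mp h
    · exfalso
      have := congrArg (constantCoeff) h
      simp only [map_add, hBconst, map_zero] at this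
      have h3 : constantCoeff ((1 - 4 * X : ℚ⟦X⟧) ^ 3) = 1 := by simp
      rw [h3] at this
      norm_num at this
  have hCu : 32 * u ^ 2 * φ C₀ = -1 + 12 * u - 24 * u ^ 2 + (1 - 4 * X) ^ 3 := by
    have h := congrArg φ hC
    simp only [map_mul, map_add, map_sub, map_neg, map_one, map_ofNat, map_pow, hφX, hBe] at h
    exact h
  have h32 : (32 * X ^ 2 : ℚ⟦X⟧) ≠ 0 :=
    mul_ne_zero (fun h => by
      have := congrArg (constantCoeff) h
      simp only [map_ofNat, map_zero] at this
      norm_num at this) (pow_ne_zero _ X_ne_zero)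
  have hcancel : (1 - 2 * X) ^ 2 * φ C₀ = X * (1 - 3 * X) := by
    apply mul_left_cancel₀ h32
    rw [hu_def] at hCu
    linear_combination hCu
  have hunit : constantCoeff ((1 - 2 * X : ℚ⟦X⟧) ^ 2) ≠ 0 := by simp
  have key : C₀.comp u = ((1 - 2 * X) ^ 2)⁻¹ * ((1 - 2 * X) ^ 2 * (φ C₀)) := by
    rw [← mul_assoc, PowerSeries.inv_mul_cancel _ hunit, one_mul]
    rfl
  rw [key, hcancel]
  ring
end

section
/- The formal power series \tilde C_0(s) = (-1 + 18s + (1-12s)^{3/2})/(54 s^2) satisfies \tilde C_0(t(1-3t)) = (1-4t)/(1-3t)^2 as formal power series in t. -/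
open PowerSeries

namespace Stmt10Aux

open Finset

lemma coeff_comp (f u : ℚ⟦X⟧) (n : ℕ) :
    PowerSeries.coeff n (f.comp u) =
      ∑ k ∈ Finset.range (n + 1),
        PowerSeries.coeff k f * PowerSeries.coeff n (u ^ k) := by
  simp [PowerSeries.comp]

lemma coeff_pow_of_lt {u : ℚ⟦X⟧} (hu : constantCoeff u = 0) {m k : ℕ} (h : m < k) :
    PowerSeries.coeff m (u ^ k) = 0 := by
  have hX : (X : ℚ⟦X⟧) ∣ u := X_dvd_iff.mpr hu
  exact (X_pow_dvd_iff.mp (pow_dvd_pow_of_dvd hX k)) m h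

lemma sum_flatten {M : Type*} [AddCommMonoid M] (n : ℕ) (F : ℕ → ℕ → M)
    (hF : ∀ i j, n < i + j → F i j = 0) :
    ∑ k ∈ range (n + 1), ∑ p ∈ Finset.HasAntidiagonal.antidiagonal k, F p.1 p.2
      = ∑ i ∈ range (n + 1), ∑ j ∈ range (n + 1), F i j := by
  have hdisj : (↑(range (n + 1)) : Set ℕ).PairwiseDisjoint
      (fun k => (Finset.HasAntidiagonal.antidiagonal k : Finset (ℕ × ℕ))) := by
    intro a _ b _ hab
    simp only [Finset.disjoint_left, Finset.HasAntidiagonal.mem_antidiagonal]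
    intro p hp hq
    exact hab (hp.symm.trans hq)
  rw [← Finset.sum_biUnion hdisj]
  have hset : (range (n + 1)).biUnion (fun k => Finset.HasAntidiagonal.antidiagonal k)
      = (range (n + 1) ×ˢ range (n + 1)).filter (fun p => p.1 + p.2 ≤ n) := by
    ext p
    simp only [Finset.mem_biUnion, Finset.HasAntidiagonal.mem_antidiagonal, Finset.mem_filter,
      Finset.mem_product, Finset.mem_range, Nat.lt_succ_iff]
    constructor
    · rintro ⟨k, hk, rfl⟩; omega
    · intro h; exact ⟨p.1 + p.2, h.2, rfl⟩
  rw [hset, ← Finset.sum_product']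
  apply Finset.sum_subset (Finset.filter_subset _ _)
  intro p hp hnp
  refine hF p.1 p.2 ?_
  by_contra hle
  exact hnp (Finset.mem_filter.mpr ⟨hp, by omega⟩)

lemma comp_mul {u : ℚ⟦X⟧} (hu : constantCoeff u = 0) (f g : ℚ⟦X⟧) :
    (f * g).comp u = f.comp u * g.comp u := by
  ext n
  rw [PowerSeries.coeff_mul, coeff_comp]
  -- rewrite RHS
  have hR : ∑ p ∈ Finset.HasAntidiagonal.antidiagonal n,
      PowerSeries.coeff p.1 (f.comp u) * PowerSeries.coeff p.2 (g.comp u)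
      = ∑ i ∈ range (n + 1), ∑ j ∈ range (n + 1),
          PowerSeries.coeff i f * PowerSeries.coeff j g *
            PowerSeries.coeff n (u ^ (i + j)) := by
    have step1 : ∀ p ∈ Finset.HasAntidiagonal.antidiagonal n,
        PowerSeries.coeff p.1 (f.comp u) * PowerSeries.coeff p.2 (g.comp u)
          = ∑ i ∈ range (n + 1), ∑ j ∈ range (n + 1),
              (PowerSeries.coeff i f * PowerSeries.coeff p.1 (u ^ i)) *
              (PowerSeries.coeff j g * PowerSeries.coeff p.2 (u ^ j)) := by
      intro p hp
      rw [Finset.HasAntidiagonal.mem_antidiagonal] at hp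
      have h1 : PowerSeries.coeff p.1 (f.comp u)
          = ∑ i ∈ range (n + 1), PowerSeries.coeff i f * PowerSeries.coeff p.1 (u ^ i) := by
        rw [coeff_comp]
        apply Finset.sum_subset
        · intro x hx; simp only [mem_range] at hx ⊢; omega
        · intro x _ hx
          simp only [mem_range, not_lt] at hx
          rw [coeff_pow_of_lt hu (by omega), mul_zero]
      have h2 : PowerSeries.coeff p.2 (g.comp u)
          = ∑ j ∈ range (n + 1), PowerSeries.coeff j g * PowerSeries.coeff p.2 (u ^ j) := by
        rw [coeff_comp]
        apply Finset.sum_subset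
        · intro x hx; simp only [mem_range] at hx ⊢; omega
        · intro x _ hx
          simp only [mem_range, not_lt] at hx
          rw [coeff_pow_of_lt hu (by omega), mul_zero]
      rw [h1, h2, Finset.sum_mul_sum]
    rw [Finset.sum_congr rfl step1, Finset.sum_comm]
    refine Finset.sum_congr rfl fun i _ => ?_
    rw [Finset.sum_comm]
    refine Finset.sum_congr rfl fun j _ => ?_
    have : ∑ p ∈ Finset.HasAntidiagonal.antidiagonal n,
        (PowerSeries.coeff i f * PowerSeries.coeff p.1 (u ^ i)) *
        (PowerSeries.coeff j g * PowerSeries.coeff p.2 (u ^ j))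
        = PowerSeries.coeff i f * PowerSeries.coeff j g *
            ∑ p ∈ Finset.HasAntidiagonal.antidiagonal n,
              PowerSeries.coeff p.1 (u ^ i) * PowerSeries.coeff p.2 (u ^ j) := by
      rw [Finset.mul_sum]
      exact Finset.sum_congr rfl fun p _ => by ring
    rw [this, ← PowerSeries.coeff_mul, ← pow_add]
  rw [hR]
  -- rewrite LHS
  have hL : ∑ k ∈ range (n + 1),
      PowerSeries.coeff k (f * g) * PowerSeries.coeff n (u ^ k)
      = ∑ k ∈ range (n + 1), ∑ p ∈ Finset.HasAntidiagonal.antidiagonal k,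
          PowerSeries.coeff p.1 f * PowerSeries.coeff p.2 g *
            PowerSeries.coeff n (u ^ (p.1 + p.2)) := by
    refine Finset.sum_congr rfl fun k _ => ?_
    rw [PowerSeries.coeff_mul, Finset.sum_mul]
    refine Finset.sum_congr rfl fun p hp => ?_
    rw [Finset.HasAntidiagonal.mem_antidiagonal] at hp
    rw [hp]
  rw [hL]
  exact sum_flatten n
    (fun i j => PowerSeries.coeff i f * PowerSeries.coeff j g *
      PowerSeries.coeff n (u ^ (i + j)))
    (fun i j hij => by simp only [coeff_pow_of_lt hu hij, mul_zero])

lemma comp_one (u : ℚ⟦X⟧) : (1 : ℚ⟦X⟧).comp u = 1 := by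
  ext n
  rw [coeff_comp]
  simp only [PowerSeries.coeff_one, ite_mul, one_mul, zero_mul]
  rw [Finset.sum_ite_eq' (range (n + 1)) 0]
  simp

lemma comp_add (u f g : ℚ⟦X⟧) : (f + g).comp u = f.comp u + g.comp u := by
  ext n
  simp [coeff_comp, add_mul, Finset.sum_add_distrib]

lemma comp_zero (u : ℚ⟦X⟧) : (0 : ℚ⟦X⟧).comp u = 0 := by
  ext n; simp [coeff_comp]

lemma comp_X {u : ℚ⟦X⟧} (hu : constantCoeff u = 0) : (X : ℚ⟦X⟧).comp u = u := by
  ext n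
  rw [coeff_comp]
  simp only [PowerSeries.coeff_X, ite_mul, one_mul, zero_mul]
  rw [Finset.sum_ite_eq' (range (n + 1)) 1]
  by_cases hn : 1 ∈ range (n + 1)
  · simp [hn]
  · simp only [hn, if_false]
    simp only [mem_range, Nat.lt_succ_iff, not_le] at hn
    interval_cases n
    simp [hu]

/-- `comp · u` as a ring hom, for `u` with zero constant term. -/
noncomputable def compHom (u : ℚ⟦X⟧) (hu : constantCoeff u = 0) : ℚ⟦X⟧ →+* ℚ⟦X⟧ where
  toFun f := f.comp u
  map_one' := comp_one u
  map_mul' := comp_mul hu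
  map_zero' := comp_zero u
  map_add' f g := comp_add u f g

lemma constantCoeff_comp (f u : ℚ⟦X⟧) :
    constantCoeff (f.comp u) = constantCoeff f := by
  rw [← PowerSeries.coeff_zero_eq_constantCoeff_apply, coeff_comp]
  simp

end Stmt10Aux

/-- The formal power series `C̃₀(s) = (-1 + 18s + (1-12s)^{3/2})/(54s²)` (with
`(1-12s)^{3/2}` the formal binomial series, i.e. the unique `B` with
`B² = (1-12s)³`, `B(0)=1`) satisfies `C̃₀(t(1-3t)) = (1-4t)/(1-3t)²` as formal
power series in `t`. -/
theorem stmt10 (B C : ℚ⟦X⟧)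
    (hB : B ^ 2 = (1 - 12 * X) ^ 3)
    (hB0 : constantCoeff B = 1)
    (hC : 54 * X ^ 2 * C = -1 + 18 * X + B) :
    C.comp (X * (1 - 3 * X)) = (1 - 4 * X) * (((1 - 3 * X) ^ 2)⁻¹) := by
  open Stmt10Aux in
  set u : ℚ⟦X⟧ := X * (1 - 3 * X) with hu_def
  have hu : constantCoeff u = 0 := by simp [hu_def]
  set φ := Stmt10Aux.compHom u hu with hφ_def
  have hφX : φ X = u := Stmt10Aux.comp_X hu
  have hφ_apply : ∀ f : ℚ⟦X⟧, φ f = f.comp u := fun f => rfl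
  -- compute φ B
  have h1 : φ B ^ 2 = ((1 - 6 * X) ^ 3 : ℚ⟦X⟧) ^ 2 := by
    rw [← map_pow, hB]
    have : φ ((1 - 12 * X) ^ 3) = (1 - 12 * u) ^ 3 := by
      rw [map_pow, map_sub, map_one, map_mul, hφX, map_ofNat]
    rw [this, hu_def]
    ring
  have hB0' : constantCoeff (φ B) = 1 := by
    rw [hφ_apply, Stmt10Aux.constantCoeff_comp, hB0]
  have hBu : φ B = (1 - 6 * X) ^ 3 := by
    have h2 : (φ B - (1 - 6 * X) ^ 3) * (φ B + (1 - 6 * X) ^ 3) = 0 := by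
      have := h1
      ring_nf
      ring_nf at this
      linear_combination this
    rcases mul_eq_zero.mp h2 with h | h
    · exact sub_eq_zero.mp h
    · exfalso
      have := congrArg (constantCoeff) h
      simp only [map_add, hB0'] at this
      have h3 : constantCoeff ((1 - 6 * X : ℚ⟦X⟧) ^ 3) = 1 := by simp
      rw [h3] at this
      norm_num at this
  -- apply φ to hC
  have hCu : (54 * X ^ 2 : ℚ⟦X⟧) * ((1 - 3 * X) ^ 2 * φ C) = 54 * X ^ 2 * (1 - 4 * X) := by
    have := congrArg φ hC
    rw [map_mul, map_mul, map_pow, map_ofNat, hφX, map_add, map_add, map_neg, map_one,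
      map_mul, map_ofNat, hφX, hBu] at this
    rw [hu_def] at this
    calc (54 * X ^ 2 : ℚ⟦X⟧) * ((1 - 3 * X) ^ 2 * φ C)
        = 54 * (X * (1 - 3 * X)) ^ 2 * φ C := by ring
      _ = -1 + 18 * (X * (1 - 3 * X)) + (1 - 6 * X) ^ 3 := this
      _ = 54 * X ^ 2 * (1 - 4 * X) := by ring
  have hX2 : (54 * X ^ 2 : ℚ⟦X⟧) ≠ 0 := by
    intro h
    have h2 := congrArg (PowerSeries.coeff 2) h
    rw [← map_ofNat PowerSeries.C 54, PowerSeries.coeff_C_mul, PowerSeries.coeff_X_pow] at h2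
    simp at h2
  have hcancel : ((1 - 3 * X) ^ 2 : ℚ⟦X⟧) * φ C = 1 - 4 * X :=
    mul_left_cancel₀ hX2 hCu
  have hunit : constantCoeff (((1 - 3 * X) ^ 2 : ℚ⟦X⟧)) ≠ 0 := by simp
  rw [← hφ_apply]
  rw [PowerSeries.eq_mul_inv_iff_mul_eq hunit]
  linear_combination hcancel
end

section
/- Let \tilde c_{g,n} satisfy the map recursion (n+1)\tilde c_{g,n} = 4(2n-1)\tilde c_{g,n-1} + (2n-1)(2n-3)(n-1)\tilde c_{g-1,n-2} + 3\sum_{i=0}^{g}\sum_{j=0}^{n-2}(2j+1)(2(n-2-j)+1)\tilde c_{i,j}\tilde c_{g-i,n-2-j} with \tilde c_{0,0}=1 and \tilde c_{g,n}=0 for n<0 or g<0 or n<2g. Then \tilde c_{g,2g} = (4g-1)!!/(2g+1). -/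
open Nat

lemma dfaux (g : ℕ) : Nat.doubleFactorial (4 * g + 1) = (4 * g + 1) * Nat.doubleFactorial (4 * g - 1) := by
  cases g with
  | zero => simp [Nat.doubleFactorial]
  | succ k =>
    have h1 : 4 * (k+1) + 1 = (4*k+3) + 2 := by ring
    have h2 : 4 * (k+1) - 1 = 4*k+3 := by omega
    rw [h1, h2, Nat.doubleFactorial]

/-- Let `c̃_{g,n}` be the rooted map numbers, defined by `c̃_{0,0} = 1`, the recursion
`(n+1)c̃_{g,n} = 4(2n-1)c̃_{g,n-1} + (2n-1)(2n-3)(n-1)c̃_{g-1,n-2}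
  + 3∑_{i=0}^{g} ∑_{j=0}^{n-2} (2j+1)(2(n-2-j)+1) c̃_{i,j} c̃_{g-i,n-2-j}`,
with `c̃_{g,n} = 0` for `n < 0` or `g < 0` or `n < 2g`. Then the minimal coefficient
is `c̃_{g,2g} = (4g-1)!!/(2g+1)` (the Harer–Zagier count of genus-`g` gluings of a
`4g`-gon). -/
theorem stmt13 (c : ℤ → ℤ → ℚ)
    (hzero : ∀ g n : ℤ, g < 0 ∨ n < 0 → c g n = 0)
    (hlow : ∀ g n : ℤ, n < 2 * g → c g n = 0)
    (h00 : c 0 0 = 1)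
    (hrec : ∀ g n : ℤ, 0 ≤ g → 1 ≤ n →
      ((n : ℚ) + 1) * c g n =
        4 * (2 * (n : ℚ) - 1) * c g (n - 1)
          + (2 * (n : ℚ) - 1) * (2 * (n : ℚ) - 3) * ((n : ℚ) - 1) * c (g - 1) (n - 2)
          + 3 * ∑ i ∈ Finset.Icc 0 g, ∑ j ∈ Finset.Icc 0 (n - 2),
              (2 * (j : ℚ) + 1) * (2 * ((n : ℚ) - 2 - (j : ℚ)) + 1)
                * c i j * c (g - i) (n - 2 - j)) :
    ∀ g : ℕ, c (g : ℤ) (2 * (g : ℤ)) =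
      (Nat.doubleFactorial (4 * g - 1) : ℚ) / (2 * (g : ℚ) + 1) := by
  intro g
  induction g with
  | zero => simpa [Nat.doubleFactorial] using h00
  | succ g ih =>
    have hg0 : (0:ℤ) ≤ (g:ℤ) := Int.ofNat_nonneg g
    have key := hrec ((g:ℤ) + 1) (2 * ((g:ℤ) + 1)) (by omega) (by omega)
    have hsum : ∀ i ∈ Finset.Icc (0:ℤ) ((g:ℤ)+1), (∑ j ∈ Finset.Icc (0:ℤ) (2*((g:ℤ)+1) - 2),
        (2 * (j : ℚ) + 1) * (2 * (((2*((g:ℤ)+1) : ℤ) : ℚ) - 2 - (j : ℚ)) + 1)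
          * c i j * c (((g:ℤ)+1) - i) (2*((g:ℤ)+1) - 2 - j)) = 0 := by
      intro i hi
      apply Finset.sum_eq_zero
      intro j hj
      simp only [Finset.mem_Icc] at hi hj
      rcases lt_or_ge j (2 * i) with h | h
      · rw [hlow i j h]; ring
      · rw [hlow (((g:ℤ)+1) - i) (2*((g:ℤ)+1) - 2 - j) (by omega)]; ring
    rw [Finset.sum_eq_zero hsum] at key
    have h1 : c ((g:ℤ)+1) (2*((g:ℤ)+1) - 1) = 0 := hlow _ _ (by omega)
    have h2 : ((g:ℤ)+1) - 1 = (g:ℤ) := by ring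
    have h3 : 2*((g:ℤ)+1) - 2 = 2*(g:ℤ) := by ring
    rw [h1, h2, h3, ih] at key
    have hdf : (Nat.doubleFactorial (4*(g+1)-1) : ℚ)
        = (4*(g:ℚ)+3) * ((4*(g:ℚ)+1) * (Nat.doubleFactorial (4*g-1) : ℚ)) := by
      have h4 : 4*(g+1)-1 = (4*g+1)+2 := by omega
      rw [h4, Nat.doubleFactorial, dfaux]
      push_cast
      ring
    have h21 : (2*(g:ℚ)+1) ≠ 0 := by positivity
    have h23 : (2*(g:ℚ)+3) ≠ 0 := by positivity
    push_cast at key ⊢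
    field_simp at key
    have key2 : (2*(g:ℚ)+3) * c ((g:ℤ)+1) (2*((g:ℤ)+1))
        = (4*(g:ℚ)+3)*((4*(g:ℚ)+1)*(Nat.doubleFactorial (4*g-1) : ℚ)) := by
      apply mul_right_cancel₀ h21
      linear_combination key
    rw [hdf, eq_div_iff (by positivity : (2*((g:ℚ)+1)+1) ≠ 0)]
    linear_combination key2
end

section
/- If a formal power series f(t) \in \mathbb{Z}[[t]] with integer coefficients equals, as a power series, the expansion of c \log(1/(1-t)) + d \log(1/(1-4t)) + R(t) where R is a rational function over \mathbb{Q} with poles only at t=1 and t=1/4, and c, d \in \mathbb{Q}, then c = d = 0. -/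
open PowerSeries

private lemma coePS_map (p : Polynomial ℤ) :
    PowerSeries.map (Int.castRingHom ℚ) (p : ℤ⟦X⟧) =
      ((p.map (Int.castRingHom ℚ) : Polynomial ℚ) : ℚ⟦X⟧) := by
  ext n
  simp [Polynomial.coeff_coe, Polynomial.coeff_map]

private lemma prime_div_all (a : ℤ) (K : ℕ)
    (h : ∀ p : ℕ, p.Prime → K ≤ p → (p : ℤ) ∣ a) : a = 0 := by
  obtain ⟨p, hp, hpp⟩ := Nat.exists_infinite_primes (max K (a.natAbs + 1))
  have h1 : (p : ℤ) ∣ a := h p hpp (le_trans (le_max_left _ _) hp)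
  refine Int.eq_zero_of_abs_lt_dvd h1 ?_
  have h2 : a.natAbs + 1 ≤ p := le_trans (le_max_right _ _) hp
  have h3 := Int.abs_eq_natAbs a
  omega

/-- Key integrality lemma: if a formal power series `f ∈ ℤ⟦t⟧` equals, as a power
series over `ℚ`, `c·log(1/(1-t)) + d·log(1/(1-4t)) + R(t)`, where
`log(1/(1-t)) = ∑_{n≥1} tⁿ/n`, `log(1/(1-4t)) = ∑_{n≥1} 4ⁿtⁿ/n`, and
`R(t) = P(t)/((1-t)^M (1-4t)^N)` is a rational function over `ℚ` with poles only at
`t = 1` and `t = 1/4` (expanded at `t = 0`), then `c = d = 0`. -/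
theorem stmt15 (f : ℤ⟦X⟧) (c d : ℚ) (M N : ℕ) (P : Polynomial ℚ)
    (h : PowerSeries.map (Int.castRingHom ℚ) f =
      c • PowerSeries.mk (fun n => if n = 0 then 0 else 1 / (n : ℚ))
        + d • PowerSeries.mk (fun n => if n = 0 then 0 else (4 : ℚ) ^ n / (n : ℚ))
        + (P : ℚ⟦X⟧) * ((((1 : ℚ⟦X⟧) - X) ^ M)⁻¹ * (((1 - 4 * X) ^ N)⁻¹))) :
    c = 0 ∧ d = 0 := by
  classical
  set u1 : ℤ⟦X⟧ := ((1 : ℤ⟦X⟧) - X) ^ M with hu1def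
  set u2 : ℤ⟦X⟧ := ((1 : ℤ⟦X⟧) - 4 * X) ^ N with hu2def
  have hc1 : constantCoeff u1 = ((1 : ℤˣ) : ℤ) := by simp [hu1def]
  have hc2 : constantCoeff u2 = ((1 : ℤˣ) : ℤ) := by simp [hu2def]
  set g1 : ℤ⟦X⟧ := invOfUnit u1 1 with hg1def
  set g2 : ℤ⟦X⟧ := invOfUnit u2 1 with hg2def
  have hmul1 : u1 * g1 = 1 := PowerSeries.mul_invOfUnit u1 1 hc1
  have hmul2 : u2 * g2 = 1 := PowerSeries.mul_invOfUnit u2 1 hc2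
  have hmap1 : PowerSeries.map (Int.castRingHom ℚ) g1 = (((1 : ℚ⟦X⟧) - X) ^ M)⁻¹ := by
    rw [PowerSeries.eq_inv_iff_mul_eq_one]
    · have hm : PowerSeries.map (Int.castRingHom ℚ) u1 = ((1 : ℚ⟦X⟧) - X) ^ M := by
        simp [hu1def]
      rw [← hm, ← map_mul, mul_comm g1 u1, hmul1, map_one]
    · simp
  have hmap2 : PowerSeries.map (Int.castRingHom ℚ) g2 = (((1 : ℚ⟦X⟧) - 4 * X) ^ N)⁻¹ := by
    rw [PowerSeries.eq_inv_iff_mul_eq_one]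
    · have hm : PowerSeries.map (Int.castRingHom ℚ) u2 = ((1 : ℚ⟦X⟧) - 4 * X) ^ N := by
        rw [hu2def, map_pow, map_sub, map_one, map_mul, PowerSeries.map_X, map_ofNat]
      rw [← hm, ← map_mul, mul_comm g2 u2, hmul2, map_one]
    · simp
  obtain ⟨b, hb⟩ := IsLocalization.integerNormalization_map_to_map (nonZeroDivisors ℤ) P
  have hbne : (b : ℤ) ≠ 0 := nonZeroDivisors.coe_ne_zero b
  set E : ℤ := (c.den : ℤ) * (d.den : ℤ) * (b : ℤ) with hEdef
  have hEne : E ≠ 0 := by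
    have h1 : (c.den : ℤ) ≠ 0 := by exact_mod_cast c.den_nz
    have h2 : (d.den : ℤ) ≠ 0 := by exact_mod_cast d.den_nz
    exact mul_ne_zero (mul_ne_zero h1 h2) hbne
  set Q : Polynomial ℤ :=
    ((c.den : ℤ) * (d.den : ℤ)) • IsLocalization.integerNormalization (nonZeroDivisors ℤ) P
    with hQdef
  have halg : algebraMap ℤ ℚ = Int.castRingHom ℚ := rfl
  have hQ : Q.map (Int.castRingHom ℚ) = E • P := by
    rw [hQdef, ← Polynomial.coe_mapRingHom, map_zsmul, Polynomial.coe_mapRingHom, ← halg, hb,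
      smul_smul, hEdef]
  set W : ℤ⟦X⟧ := (Q : ℤ⟦X⟧) * g1 * g2 with hWdef
  set S : ℚ⟦X⟧ := (P : ℚ⟦X⟧) * ((((1 : ℚ⟦X⟧) - X) ^ M)⁻¹ * (((1 - 4 * X) ^ N)⁻¹)) with hSdef
  have hW : ∀ n : ℕ, (E : ℚ) * (PowerSeries.coeff n) S = ((PowerSeries.coeff n W : ℤ) : ℚ) := by
    intro n
    have hcoe : (((E • P : Polynomial ℚ)) : ℚ⟦X⟧) = E • ((P : Polynomial ℚ) : ℚ⟦X⟧) :=
      map_zsmul Polynomial.coeToPowerSeries.ringHom E P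
    have hmapW : PowerSeries.map (Int.castRingHom ℚ) W = E • S := by
      rw [hWdef, map_mul, map_mul, hmap1, hmap2, coePS_map, hQ, hcoe, hSdef,
        smul_mul_assoc, smul_mul_assoc, mul_assoc]
    have h1 : ((PowerSeries.coeff n W : ℤ) : ℚ) = (PowerSeries.coeff n) (E • S) := by
      rw [← hmapW, PowerSeries.coeff_map]; rfl
    rw [h1, map_zsmul, zsmul_eq_mul]
    try push_cast
    try ring
  set c' : ℤ := (d.den : ℤ) * (b : ℤ) * c.num with hc'def
  set d' : ℤ := (c.den : ℤ) * (b : ℤ) * d.num with hd'def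
  have hcden : (c.den : ℚ) ≠ 0 := by exact_mod_cast c.den_nz
  have hdden : (d.den : ℚ) ≠ 0 := by exact_mod_cast d.den_nz
  have hcnum : (c.num : ℚ) = c * c.den := by
    have h0 := c.num_div_den
    rwa [div_eq_iff hcden] at h0
  have hdnum : (d.num : ℚ) = d * d.den := by
    have h0 := d.num_div_den
    rwa [div_eq_iff hdden] at h0
  have hc' : (c' : ℚ) = (E : ℚ) * c := by
    rw [hc'def, hEdef]
    push_cast
    rw [hcnum]
    ring
  have hd' : (d' : ℚ) = (E : ℚ) * d := by
    rw [hd'def, hEdef]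
    push_cast
    rw [hdnum]
    ring
  have key : ∀ n : ℕ, 1 ≤ n → (n : ℤ) ∣ c' + d' * 4 ^ n := by
    intro n hn
    have hc0 := congrArg (PowerSeries.coeff n) h
    rw [map_add, map_add, PowerSeries.coeff_smul, PowerSeries.coeff_smul,
      PowerSeries.coeff_mk, PowerSeries.coeff_mk, PowerSeries.coeff_map] at hc0
    have hn0 : n ≠ 0 := by omega
    rw [if_neg hn0, if_neg hn0] at hc0
    have hnq : (n : ℚ) ≠ 0 := by exact_mod_cast hn0
    have h2 : (E : ℚ) * ((f.coeff n : ℤ) : ℚ)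
        = (c' : ℚ) * (1 / n) + (d' : ℚ) * (4 ^ n / n) + ((PowerSeries.coeff n W : ℤ) : ℚ) := by
      have hc0' : ((f.coeff n : ℤ) : ℚ) = c * (1/n) + d * (4^n/n) + (PowerSeries.coeff n) S := by
        rw [show ((f.coeff n : ℤ) : ℚ) = (Int.castRingHom ℚ) (f.coeff n) from rfl, hc0]
        simp [smul_eq_mul, hSdef]
        try ring
      rw [hc0', hc', hd', ← hW n]
      ring
    refine ⟨E * f.coeff n - PowerSeries.coeff n W, ?_⟩
    have h3 : ((c' + d' * 4 ^ n : ℤ) : ℚ)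
        = (n : ℚ) * ((E * f.coeff n - PowerSeries.coeff n W : ℤ) : ℚ) := by
      push_cast
      rw [mul_sub]
      field_simp at h2
      linarith
    exact_mod_cast h3
  have hA : c' + d' * 4 = 0 := by
    apply prime_div_all _ 2
    intro p hp _
    haveI : Fact p.Prime := ⟨hp⟩
    have h1 := key p hp.one_lt.le
    have h2 : ((c' + d' * 4 ^ p : ℤ) : ZMod p) = 0 :=
      (ZMod.intCast_zmod_eq_zero_iff_dvd _ _).2 h1
    rw [← ZMod.intCast_zmod_eq_zero_iff_dvd]
    push_cast at h2 ⊢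
    rwa [ZMod.pow_card] at h2
  have hB : c' + d' = 0 := by
    apply prime_div_all _ 5
    intro p hp hp5
    haveI : Fact p.Prime := ⟨hp⟩
    have hn1 : 1 ≤ p * (p - 1) := by
      have := hp.two_le
      exact Nat.one_le_iff_ne_zero.mpr (Nat.mul_ne_zero (by omega) (by omega))
    have h1 := key (p * (p - 1)) hn1
    have hpd : (p : ℤ) ∣ c' + d' * 4 ^ (p * (p - 1)) := by
      refine dvd_trans ?_ h1
      exact_mod_cast Dvd.intro _ rfl
    have h2 : ((c' + d' * 4 ^ (p * (p - 1)) : ℤ) : ZMod p) = 0 :=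
      (ZMod.intCast_zmod_eq_zero_iff_dvd _ _).2 hpd
    rw [← ZMod.intCast_zmod_eq_zero_iff_dvd]
    push_cast at h2 ⊢
    have h4 : (4 : ZMod p) ≠ 0 := by
      have h5 : ((4 : ℕ) : ZMod p) ≠ 0 := by
        rw [Ne, ZMod.natCast_eq_zero_iff]
        intro hdvd
        have := Nat.le_of_dvd (by norm_num) hdvd
        omega
      simpa using h5
    have h5 : (4 : ZMod p) ^ (p * (p - 1)) = 1 := by
      rw [mul_comm, pow_mul, ZMod.pow_card_sub_one_eq_one h4, one_pow]
    rwa [h5, mul_one] at h2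
  have hd'0 : d' = 0 := by omega
  have hc'0 : c' = 0 := by omega
  have hc0 : (E : ℚ) * c = 0 := by rw [← hc']; exact_mod_cast hc'0
  have hd0 : (E : ℚ) * d = 0 := by rw [← hd']; exact_mod_cast hd'0
  have hEq : (E : ℚ) ≠ 0 := by exact_mod_cast hEne
  exact ⟨by simpa [hEq] using hc0, by simpa [hEq] using hd0⟩
end
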